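/- Suppose F(z) = Σ_{m=0}^∞ a_m e^{2πimz/λ} converges on the upper half-plane, F is holomorphic there, and |F(z)| ≤ C(|z|^α + y^{-β}) for all z = x + iy with y > 0, for some constants C, α, β > 0. Then the Fourier coefficients satisfy a_m = O(m^β) as m → ∞. -/

import Mathlib

open Complex Filter Asymptotics
open scoped Real

/-!
On a horizontal line `Im z = y` the expansion converges unconditionally, hence absolutely, so it
may be integrated termwise against `e^{-2πimx/λ}` over one period; orthogonality of the
exponentials leaves `λ e^{-2πmy/λ} a_m`. This is a Cauchy-type estimate
`|a_m| ≤ e^{2πmy/λ} sup_{0 ≤ x ≤ λ} |F(x + iy)| ≤ e^{2πmy/λ} C ((λ + y)^α + y^{-β})`,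
and the height `y = λ/m` turns it into `O(m^β)`.
-/

theorem integral_exp_two_pi_I_int_mul_div {lam : ℝ} (hlam : lam ≠ 0) (k : ℤ) :
    ∫ x in (0 : ℝ)..lam, exp (2 * π * I * k * x / lam) = if k = 0 then (lam : ℂ) else 0 := by
  split_ifs with hk
  · simp [hk]
  · have hc : 2 * π * I * k / lam ≠ 0 := by simp [hk, hlam, Real.pi_ne_zero]
    have hperiod : exp (2 * π * I * k / lam * lam) = 1 := by
      rw [div_mul_cancel₀ _ (ofReal_ne_zero.2 hlam)]
      convert exp_int_mul_two_pi_mul_I k using 2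
      ring
    simp_rw [mul_div_right_comm _ ((_ : ℝ) : ℂ), integral_exp_mul_complex hc, hperiod]
    simp

section HorizontalLine

variable {lam y : ℝ} {a : ℕ → ℂ} {F : ℂ → ℂ}

theorem integral_mul_exp_neg_eq_mul_coeff (hlam : lam ≠ 0)
    (hsum : ∀ x : ℝ, HasSum (fun n : ℕ => a n * exp (2 * π * I * n * (x + y * I) / lam))
      (F (x + y * I))) (m : ℕ) :
    ∫ x in (0 : ℝ)..lam, F (x + y * I) * exp (-(2 * π * I * m * x / lam))
      = lam * Real.exp (-(2 * π * m * y / lam)) * a m := by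
  set w : ℕ → ℝ := fun n => Real.exp (-(2 * π * n * y / lam))
  have hterm : ∀ (n : ℕ) (x : ℝ),
      a n * exp (2 * π * I * n * (x + y * I) / lam) * exp (-(2 * π * I * m * x / lam))
        = a n * w n * exp (2 * π * I * (n - m : ℤ) * x / lam) := by
    intro n x
    simp only [w, ofReal_exp, mul_assoc, ← exp_add]
    congr 2
    push_cast
    linear_combination (2 * π * n * y / lam : ℂ) * I_sq
  have hint (n : ℕ) : ∫ x in (0 : ℝ)..lam, a n * w n * exp (2 * π * I * (n - m : ℤ) * x / lam)
      = if n = m then lam * w m * a m else 0 := by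
    simp only [intervalIntegral.integral_const_mul, integral_exp_two_pi_I_int_mul_div hlam,
      sub_eq_zero, Nat.cast_inj]
    split_ifs with h
    · subst h; ring
    · simp
  have hsummable : Summable fun n => ‖a n‖ * w n := by
    simpa [w, norm_exp, div_ofReal_re, mul_assoc, neg_div] using (hsum 0).summable.norm
  have hasSum_integral : HasSum
      (fun n => ∫ x in (0 : ℝ)..lam, a n * w n * exp (2 * π * I * (n - m : ℤ) * x / lam))
      (∫ x in (0 : ℝ)..lam, F (x + y * I) * exp (-(2 * π * I * m * x / lam))) := by
    refine intervalIntegral.hasSum_integral_of_dominated_convergence (fun n _ => ‖a n‖ * w n)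
      (fun n => (by fun_prop : Continuous _).aestronglyMeasurable) ?_
      (Eventually.of_forall fun _ _ => hsummable) intervalIntegrable_const ?_
    · refine fun n => Eventually.of_forall fun x _ => ?_
      simp [w, norm_exp, div_ofReal_re]
    · refine Eventually.of_forall fun x _ => ?_
      simpa only [hterm] using (hsum x).mul_right (exp (-(2 * π * I * m * x / lam)))
  simp_rw [hint] at hasSum_integral
  exact hasSum_integral.unique (hasSum_ite_eq m _)

theorem norm_coeff_le_exp_mul_of_norm_le (hlam : 0 < lam)
    (hsum : ∀ x : ℝ, HasSum (fun n : ℕ => a n * exp (2 * π * I * n * (x + y * I) / lam))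
      (F (x + y * I)))
    {M : ℝ} (hM : ∀ x ∈ Set.Icc 0 lam, ‖F (x + y * I)‖ ≤ M) (m : ℕ) :
    ‖a m‖ ≤ Real.exp (2 * π * m * y / lam) * M := by
  have hle := intervalIntegral.norm_integral_le_of_norm_le_const
    (f := fun x : ℝ => F (x + y * I) * exp (-(2 * π * I * m * x / lam))) fun x hx => by
      rw [Set.uIoc_of_le hlam.le] at hx
      simpa [norm_exp, div_ofReal_re] using hM x (Set.Ioc_subset_Icc_self hx)
  rw [integral_mul_exp_neg_eq_mul_coeff hlam.ne' hsum m] at hle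
  simp only [norm_mul, norm_real, Real.norm_eq_abs, Real.abs_exp, sub_zero, abs_of_pos hlam]
    at hle
  rw [Real.exp_neg, mul_assoc, mul_comm M] at hle
  exact (inv_mul_le_iff₀ (Real.exp_pos _)).1 (le_of_mul_le_mul_left hle hlam)

end HorizontalLine

theorem rpow_add_div_add_rpow_neg_div_le {lam α β t : ℝ} (hlam : 0 < lam) (hα : 0 ≤ α)
    (hβ : 0 ≤ β) (ht : 1 ≤ t) :
    (lam + lam / t) ^ α + (lam / t) ^ (-β) ≤ ((lam + lam) ^ α + lam ^ (-β)) * t ^ β := by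
  have ht0 : 0 < t := one_pos.trans_le ht
  have hdiv : (lam / t) ^ (-β) = lam ^ (-β) * t ^ β := by
    rw [Real.div_rpow hlam.le ht0.le, Real.rpow_neg hlam.le, Real.rpow_neg ht0.le, div_inv_eq_mul]
  have hmono : (lam + lam / t) ^ α ≤ (lam + lam) ^ α * t ^ β := by
    calc (lam + lam / t) ^ α ≤ (lam + lam) ^ α := by
          gcongr
          exact div_le_self hlam.le ht
      _ ≤ (lam + lam) ^ α * t ^ β :=
          le_mul_of_one_le_right (by positivity) (Real.one_le_rpow ht hβ)
  rw [hdiv, add_mul]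
  linarith

theorem fourier_coeff_growth_general (lam : ℝ) (hlam : 0 < lam) (a : ℕ → ℂ) (F : ℂ → ℂ)
    (C α β : ℝ) (hC : 0 < C) (hα : 0 < α) (hβ : 0 < β)
    (hsum : ∀ z : ℂ, 0 < z.im →
      HasSum (fun m : ℕ => a m * Complex.exp (2 * π * Complex.I * m * z / lam)) (F z))
    (hbound : ∀ z : ℂ, 0 < z.im → ‖F z‖ ≤ C * (‖z‖ ^ α + z.im ^ (-β : ℝ))) :
    (fun m : ℕ => a m) =O[atTop] (fun m : ℕ => (m : ℝ) ^ β) := by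
  have norm_coeff_le (m : ℕ) {y : ℝ} (hy : 0 < y) :
      ‖a m‖ ≤ Real.exp (2 * π * m * y / lam) * (C * ((lam + y) ^ α + y ^ (-β))) := by
    refine norm_coeff_le_exp_mul_of_norm_le hlam (fun x => hsum _ (by simpa using hy))
      (fun x hx => ?_) m
    have hz : ‖(x : ℂ) + y * I‖ ≤ lam + y := (norm_add_le _ _).trans
      (by simp [abs_of_nonneg hx.1, abs_of_pos hy, hx.2])
    calc ‖F (x + y * I)‖ ≤ C * (‖(x : ℂ) + y * I‖ ^ α + y ^ (-β)) := by
          simpa using hbound (x + y * I) (by simpa using hy)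
      _ ≤ C * ((lam + y) ^ α + y ^ (-β)) := by gcongr
  refine IsBigO.of_bound (Real.exp (2 * π) * (C * ((lam + lam) ^ α + lam ^ (-β)))) ?_
  filter_upwards [eventually_ge_atTop 1] with m hm
  have hm' : (1 : ℝ) ≤ m := by exact_mod_cast hm
  have hexp : 2 * π * m * (lam / m) / lam = 2 * π := by field_simp
  calc ‖a m‖ ≤ Real.exp (2 * π) * (C * ((lam + lam / m) ^ α + (lam / m) ^ (-β))) := by
        simpa only [hexp] using norm_coeff_le m (y := lam / m) (by positivity)
    _ ≤ Real.exp (2 * π) * (C * (((lam + lam) ^ α + lam ^ (-β)) * m ^ β)) := by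
        gcongr
        exact rpow_add_div_add_rpow_neg_div_le hlam hα.le hβ.le hm'
    _ = _ := by
        rw [Real.norm_of_nonneg (by positivity)]
        ring

/-- If `F(z) = Σ_{m≥0} a_m e^{2πimz/λ}` is holomorphic on the upper half-plane and satisfies
the growth condition `|F(z)| ≤ C (|z|^α + y^{-β})` for `z = x + iy`, `y > 0`, then the Fourier
coefficients satisfy `a_m = O(m^β)` as `m → ∞`. -/
theorem fourier_coeff_growth (lam : ℝ) (hlam : 0 < lam) (a : ℕ → ℂ) (F : ℂ → ℂ)
    (C α β : ℝ) (hC : 0 < C) (hα : 0 < α) (hβ : 0 < β)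
    (hol : DifferentiableOn ℂ F {z : ℂ | 0 < z.im})
    (hsum : ∀ z : ℂ, 0 < z.im →
      HasSum (fun m : ℕ => a m * Complex.exp (2 * π * Complex.I * m * z / lam)) (F z))
    (hbound : ∀ z : ℂ, 0 < z.im → ‖F z‖ ≤ C * (‖z‖ ^ α + z.im ^ (-β : ℝ))) :
    (fun m : ℕ => a m) =O[atTop] (fun m : ℕ => (m : ℝ) ^ β) :=
  fourier_coeff_growth_general lam hlam a F C α β hC hα hβ hsum hbound
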